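/- Let n, k ∈ ℕ, let p ∈ (0,1), s ∈ (0,1], γ, λ ∈ [0,1] (with λγn and (1−λ)γn integers), and let (B1,B2,G̃1,G̃2,π*) be distributed according to WCG(n,p,s,γ,λ). Let μ̂_k be any (measurably selected) output of the k-core estimator applied to (G̃1,G̃2). Then P( dom(μ̂_k) = core_k(G̃1 ∧_{π*} G̃2) and μ̂_k(i) = π*(i) for all i ∈ dom(μ̂_k) ) ≥ 2 − exp(n²ξ), where ξ := max_{1 ≤ d ≤ n} max_{μ ∈ M(id,d)} P( f(μ) ≥ k·d | π* = id )^{1/d}, with f(μ) := Σ_{i ∈ dom(μ), μ(i) ≠ i} deg_{G̃1 ∧_μ G̃2}(i). -/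

import Mathlib

open MeasureTheory ProbabilityTheory Filter Set
open scoped ENNReal Classical Topology

namespace Paper

/-- Index type of potential edges of a graph on `[n] = Fin n`. -/
abbrev EdgeIdx (n : ℕ) := {e : Sym2 (Fin n) // ¬ e.IsDiag}

/-- A graph on `[n]`, given by its edge indicators. -/
abbrev Graph (n : ℕ) := EdgeIdx n → Bool

instance (n : ℕ) : MeasurableSpace (Finset (Fin n)) := ⊤
instance (n : ℕ) : MeasurableSpace (Equiv.Perm (Fin n)) := ⊤

/-- Bernoulli measure on `Bool` with success probability `q` (clamped into `[0,1]`). -/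
noncomputable def bern (q : ℝ) : Measure Bool :=
  (PMF.bernoulli (min (Real.toNNReal q) 1) (min_le_right _ _)).toMeasure

/-- i.i.d. Bernoulli(q) edge indicators: the Erdős–Rényi measure on graphs on `[n]`. -/
noncomputable def erMeasure (n : ℕ) (q : ℝ) : Measure (Graph n) :=
  Measure.pi fun _ : EdgeIdx n => bern q

/-- Uniform probability measure on a finite set. -/
noncomputable def uniformFinset {α : Type*} [MeasurableSpace α] (t : Finset α) : Measure α :=
  (t.card : ℝ≥0∞)⁻¹ • ∑ a ∈ t, Measure.dirac a

/-- The uniform random permutation of `[n]`. -/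
noncomputable def uniformPerm (n : ℕ) : Measure (Equiv.Perm (Fin n)) :=
  uniformFinset Finset.univ

/-- The uniform random subset of `[n]` of size `m`. -/
noncomputable def uniformSized (n m : ℕ) : Measure (Finset (Fin n)) :=
  uniformFinset ((Finset.univ : Finset (Finset (Fin n))).filter fun S => S.card = m)

lemma not_isDiag_map {n : ℕ} (π : Equiv.Perm (Fin n)) {e : Sym2 (Fin n)} (h : ¬ e.IsDiag) :
    ¬ (e.map π).IsDiag := by
  induction e using Sym2.ind with
  | _ x y =>
    simp only [Sym2.map_pair_eq, Sym2.mk_isDiag_iff] at h ⊢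
    exact fun hxy => h (π.injective hxy)

/-- Action of a permutation on (indices of) potential edges. -/
def edgeMap {n : ℕ} (π : Equiv.Perm (Fin n)) (e : EdgeIdx n) : EdgeIdx n :=
  ⟨e.1.map π, not_isDiag_map π e.2⟩

/-- `{i,j}` is an edge of `G`. -/
def adjB {n : ℕ} (G : Graph n) (i j : Fin n) : Bool :=
  if h : i = j then false else G ⟨s(i, j), by simpa [Sym2.mk_isDiag_iff] using h⟩

/-- The potential edge `e` has an endpoint in `B`. -/
def touches {n : ℕ} (B : Finset (Fin n)) (e : EdgeIdx n) : Prop := ∃ i ∈ B, i ∈ e.1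

/-- Replace the edge status of every pair touching `B` by the fresh values `F`. -/
noncomputable def corrupt {n : ℕ} (B : Finset (Fin n)) (G F : Graph n) : Graph n :=
  fun e => if touches B e then F e else G e

/-- A matching: an injective map from a subset of `[n]` into `[n]`. -/
structure Matching (n : ℕ) where
  dom : Finset (Fin n)
  f : Fin n → Fin n
  injOn : Set.InjOn f dom

instance (n : ℕ) : MeasurableSpace (Matching n) := ⊤

/-- The overlap of a matching with a permutation: the number of correctly matched nodes. -/
def ov {n : ℕ} (μ : Matching n) (π : Equiv.Perm (Fin n)) : ℕ :=
  (μ.dom.filter fun i => μ.f i = π i).card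

/-- The output tuple `(B1, B2, G̃1, G̃2, π*)` of a corruption model. -/
structure Out (n : ℕ) where
  B1 : Finset (Fin n)
  B2 : Finset (Fin n)
  Gt1 : Graph n
  Gt2 : Graph n
  prm : Equiv.Perm (Fin n)

instance (n : ℕ) : MeasurableSpace (Out n) := ⊤

/-- Underlying sample space for the WCG model:
parent graph, two subsampling masks, two fresh-resampling graphs, π*, B1, B2. -/
abbrev WCGSpace (n : ℕ) :=
  Graph n × Graph n × Graph n × Graph n × Graph n ×
    Equiv.Perm (Fin n) × Finset (Fin n) × Finset (Fin n)

noncomputable def wcgBase (n : ℕ) (p s : ℝ) (a b : ℕ) : Measure (WCGSpace n) :=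
  (erMeasure n p).prod ((erMeasure n s).prod ((erMeasure n s).prod
    ((erMeasure n (p * s)).prod ((erMeasure n (p * s)).prod
      ((uniformPerm n).prod ((uniformSized n a).prod (uniformSized n b)))))))

noncomputable def wcgBuild (n : ℕ) (ω : WCGSpace n) : Out n :=
  { B1 := ω.2.2.2.2.2.2.1
    B2 := ω.2.2.2.2.2.2.2
    Gt1 := corrupt ω.2.2.2.2.2.2.1 (fun e => ω.1 e && ω.2.1 e) ω.2.2.2.1
    Gt2 := corrupt ω.2.2.2.2.2.2.2
      (fun e => ω.1 (edgeMap ω.2.2.2.2.2.1⁻¹ e) && ω.2.2.1 (edgeMap ω.2.2.2.2.2.1⁻¹ e))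
      ω.2.2.2.2.1
    prm := ω.2.2.2.2.2.1 }

/-- The weakly corrupted graphs model `WCG(n,p,s,γ,λ)`, where `a = λγn` and `b = (1-λ)γn`:
the joint law of `(B1, B2, G̃1, G̃2, π*)`. -/
noncomputable def WCG (n : ℕ) (p s : ℝ) (a b : ℕ) : Measure (Out n) :=
  (wcgBase n p s a b).map (wcgBuild n)

/-- The output tuple `(G1, G2, π*)` of the correlated Erdős–Rényi model. -/
structure CEROut (n : ℕ) where
  G1 : Graph n
  G2 : Graph n
  prm : Equiv.Perm (Fin n)

instance (n : ℕ) : MeasurableSpace (CEROut n) := ⊤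

abbrev CERSpace (n : ℕ) := Graph n × Graph n × Graph n × Equiv.Perm (Fin n)

noncomputable def cerBuild (n : ℕ) (ω : CERSpace n) : CEROut n :=
  { G1 := fun e => ω.1 e && ω.2.1 e
    G2 := fun e => ω.1 (edgeMap ω.2.2.2⁻¹ e) && ω.2.2.1 (edgeMap ω.2.2.2⁻¹ e)
    prm := ω.2.2.2 }

/-- The correlated Erdős–Rényi model `CER(n,p,s)`: the joint law of `(G1, G2, π*)`. -/
noncomputable def CER (n : ℕ) (p s : ℝ) : Measure (CEROut n) :=
  (cerBase n p s).map (cerBuild n)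
  where cerBase (n : ℕ) (p s : ℝ) : Measure (CERSpace n) :=
    (erMeasure n p).prod ((erMeasure n s).prod ((erMeasure n s).prod (uniformPerm n)))

/-- A strong adversary with auxiliary randomness in `U`: any rule producing, from `(G1,G2,π*)`
and an auxiliary sample, sets `B1`, `B2` of prescribed sizes and corrupted graphs agreeing
with `G1` (resp. `G2`) on every pair not touching `B1` (resp. `B2`). -/
structure Adversary (n a b : ℕ) (U : Type) where
  act : CEROut n → U → Out n
  prm_eq : ∀ ω u, (act ω u).prm = ω.prm
  cardB1 : ∀ ω u, (act ω u).B1.card = a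
  cardB2 : ∀ ω u, (act ω u).B2.card = b
  agree1 : ∀ ω u (e : EdgeIdx n), ¬ touches (act ω u).B1 e → (act ω u).Gt1 e = ω.G1 e
  agree2 : ∀ ω u (e : EdgeIdx n), ¬ touches (act ω u).B2 e → (act ω u).Gt2 e = ω.G2 e

/-- The strongly corrupted graphs model `SCG(n,p,s,γ,λ,A)`:
the joint law of `(B1, B2, G̃1, G̃2, π*)`. -/
noncomputable def SCG (n : ℕ) (p s : ℝ) {a b : ℕ} {U : Type} [MeasurableSpace U]
    (ν : Measure U) (A : Adversary n a b U) : Measure (Out n) :=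
  ((CER n p s).prod ν).map fun ω => A.act ω.1 ω.2

/-- Degree of `i` in the intersection graph `H1 ∧_μ H2`. -/
def interDeg {n : ℕ} (H1 H2 : Graph n) (μ : Matching n) (i : Fin n) : ℕ :=
  (μ.dom.filter fun j => adjB H1 i j ∧ adjB H2 (μ.f i) (μ.f j)).card

/-- Number of edges of the intersection graph `H1 ∧_μ H2`. -/
def interCount {n : ℕ} (H1 H2 : Graph n) (μ : Matching n) : ℕ :=
  ((μ.dom ×ˢ μ.dom).filter fun q =>
    q.1 < q.2 ∧ adjB H1 q.1 q.2 ∧ adjB H2 (μ.f q.1) (μ.f q.2)).card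

/-- `μ` is a `k`-core matching of `(H1,H2)`: min degree of `H1 ∧_μ H2` is at least `k`. -/
def IsKCoreMatching {n : ℕ} (k : ℕ) (H1 H2 : Graph n) (μ : Matching n) : Prop :=
  ∀ i ∈ μ.dom, k ≤ interDeg H1 H2 μ i

/-- `E` is a `k`-core estimator: it always outputs a `k`-core matching of maximal domain size. -/
def IsKCoreEstimator {n : ℕ} (k : ℕ) (E : Graph n × Graph n → Matching n) : Prop :=
  ∀ x : Graph n × Graph n, IsKCoreMatching k x.1 x.2 (E x) ∧
    ∀ μ : Matching n, IsKCoreMatching k x.1 x.2 μ → μ.dom.card ≤ (E x).dom.card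

/-- `E` is a maximum overlap estimator: its output maximizes the number of edges of the
intersection graph. -/
def IsMaxOverlapEstimator {n : ℕ} (E : Graph n × Graph n → Matching n) : Prop :=
  ∀ x : Graph n × Graph n, ∀ μ : Matching n, interCount x.1 x.2 μ ≤ interCount x.1 x.2 (E x)

/-- `X(π)`: the number of pairs `{i,j}` with `{i,j} ∈ E(G1)` and `{π i, π j} ∈ E(G2)`. -/
def Xcount {n : ℕ} (G1 G2 : Graph n) (π : Equiv.Perm (Fin n)) : ℕ :=
  (Finset.univ.filter fun e : EdgeIdx n => G1 e ∧ G2 (edgeMap π e)).card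

/-- The intersection graph `H1 ∧_π H2` (full vertex set, `π` a permutation). -/
def interGraph {n : ℕ} (H1 H2 : Graph n) (π : Equiv.Perm (Fin n)) : Graph n :=
  fun e => H1 e && H2 (edgeMap π e)

/-- Degree of `i` into the set `A` in the graph `G`. -/
def degInSet {n : ℕ} (G : Graph n) (A : Finset (Fin n)) (i : Fin n) : ℕ :=
  (A.filter fun j => adjB G i j).card

/-- Degree of `i` in the graph `G`. -/
def degFull {n : ℕ} (G : Graph n) (i : Fin n) : ℕ := degInSet G Finset.univ i

/-- `A` induces a subgraph of `G` of minimum degree at least `k`. -/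
def IsCoreSet {n : ℕ} (G : Graph n) (k : ℕ) (A : Finset (Fin n)) : Prop :=
  ∀ i ∈ A, k ≤ degInSet G A i

/-- The `k`-core of `G`: the largest vertex set inducing a subgraph of min degree `≥ k`
(equals the union of all such sets). -/
noncomputable def coreK {n : ℕ} (G : Graph n) (k : ℕ) : Finset (Fin n) :=
  ((Finset.univ : Finset (Finset (Fin n))).filter fun A => IsCoreSet G k A).sup id

/-! If the estimate `ν = μ̂_k` is wrong, complete it by `π*` to a `π*`-maximal matching `μ`.
Its mismatches are those of `ν`, each of degree at least `k` in `G̃1 ∧_μ G̃2`, so `f(μ) ≥ k d`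
with `d ≥ 1` mismatches; if `ν` had no mismatch, the maximality of the `k`-core estimator would
force `dom ν = core_k(G̃1 ∧_{π*} G̃2)`. Relabelling the sample by `π` preserves the law and maps
`π* = id` to `π* = π`, so a union bound over `π*` and over the canonical `μ` gives
`P(failure) ≤ ∑_d C(n², d) ξ^d ≤ exp(n²ξ) - 1`, as a canonical `μ` is determined by its `d`
mismatched pairs. -/

lemma sum_choose_mul_pow_le_exp_sub_one {x : ℝ} (hx : 0 ≤ x) (m N : ℕ) :
    ∑ d ∈ Finset.Icc 1 N, (m.choose d : ℝ) * x ^ d ≤ Real.exp (m * x) - 1 := by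
  have hexp := Real.sum_le_exp_of_nonneg (mul_nonneg m.cast_nonneg hx) (N + 1)
  rw [← Nat.Ico_zero_eq_range, Finset.Ico_add_one_right_eq_Icc,
    ← Finset.insert_Icc_add_one_left_eq_Icc N.zero_le, Finset.sum_insert (by simp)] at hexp
  have hterm (d : ℕ) : (m.choose d : ℝ) * x ^ d ≤ (m * x) ^ d / d.factorial := by
    rw [mul_pow, mul_div_right_comm]
    exact mul_le_mul_of_nonneg_right (Nat.choose_le_pow_div d m) (pow_nonneg hx d)
  have := Finset.sum_le_sum fun d (_ : d ∈ Finset.Icc 1 N) => hterm d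
  simp only [pow_zero, Nat.factorial_zero, Nat.cast_one, div_one, zero_add] at hexp
  linarith

lemma sum_le_exp_sub_one_of_card_fiber_le {ι : Type*} (S : Finset ι) (deg : ι → ℕ)
    (r : ι → ℝ) {x : ℝ} (hx : 0 ≤ x) (m N : ℕ) (hdeg : ∀ i ∈ S, deg i ∈ Finset.Icc 1 N)
    (hr : ∀ i ∈ S, r i ≤ x ^ deg i)
    (hfiber : ∀ d, (S.filter fun i => deg i = d).card ≤ m.choose d) :
    ∑ i ∈ S, r i ≤ Real.exp (m * x) - 1 :=
  calc ∑ i ∈ S, r i ≤ ∑ i ∈ S, x ^ deg i := Finset.sum_le_sum hr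
    _ = ∑ d ∈ Finset.Icc 1 N, ∑ i ∈ S.filter (fun i => deg i = d), x ^ deg i :=
        (Finset.sum_fiberwise_of_maps_to hdeg _).symm
    _ = ∑ d ∈ Finset.Icc 1 N, ((S.filter fun i => deg i = d).card : ℝ) * x ^ d := by
        refine Finset.sum_congr rfl fun d _ => ?_
        rw [Finset.sum_congr rfl fun i hi => by rw [(Finset.mem_filter.1 hi).2],
          Finset.sum_const, nsmul_eq_mul]
    _ ≤ ∑ d ∈ Finset.Icc 1 N, (m.choose d : ℝ) * x ^ d :=
        Finset.sum_le_sum fun d _ =>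
          mul_le_mul_of_nonneg_right (by exact_mod_cast hfiber d) (pow_nonneg hx d)
    _ ≤ Real.exp (m * x) - 1 := sum_choose_mul_pow_le_exp_sub_one hx m N

lemma le_iSup_iSup_of_le {ι κ : Type*} {P : ι → Prop} {Q : ι → κ → Prop}
    {g : ι → κ → ℝ} (hg : ∀ i j, g i j ≤ 1) {x : ℝ} {i : ι} {j : κ} (hP : P i) (hQ : Q i j)
    (hx : x ≤ g i j) : x ≤ ⨆ (i) (_ : P i) (j) (_ : Q i j), g i j := by
  have hQ₁ (i : ι) (j : κ) : ⨆ (_ : Q i j), g i j ≤ 1 := Real.iSup_le (fun _ => hg i j) zero_le_one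
  have hP₁ (i : ι) : ⨆ (_ : P i) (j) (_ : Q i j), g i j ≤ 1 :=
    Real.iSup_le (fun _ => Real.iSup_le (hQ₁ i) zero_le_one) zero_le_one
  calc x ≤ g i j := hx
    _ = ⨆ (_ : Q i j), g i j := (ciSup_pos (f := fun _ => g i j) hQ).symm
    _ ≤ ⨆ (j) (_ : Q i j), g i j := le_ciSup ⟨1, Set.forall_mem_range.2 (hQ₁ i)⟩ j
    _ = ⨆ (_ : P i) (j) (_ : Q i j), g i j :=
        (ciSup_pos (f := fun _ => ⨆ (j) (_ : Q i j), g i j) hP).symm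
    _ ≤ _ := le_ciSup ⟨1, Set.forall_mem_range.2 hP₁⟩ i

instance (n : ℕ) : DiscreteMeasurableSpace (Finset (Fin n)) := ⟨fun _ => trivial⟩
instance (n : ℕ) : DiscreteMeasurableSpace (Equiv.Perm (Fin n)) := ⟨fun _ => trivial⟩
instance (n : ℕ) : DiscreteMeasurableSpace (Out n) := ⟨fun _ => trivial⟩
instance (n : ℕ) : DiscreteMeasurableSpace (WCGSpace n) :=
  MeasurableSingletonClass.toDiscreteMeasurableSpace

noncomputable instance (n : ℕ) : Fintype (Matching n) :=
  Fintype.ofInjective (fun μ : Matching n => (μ.dom, μ.f)) (by rintro ⟨⟩ ⟨⟩ h; simp_all)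

instance (q : ℝ) : IsProbabilityMeasure (bern q) := PMF.toMeasure.isProbabilityMeasure _

instance (n : ℕ) (q : ℝ) : IsProbabilityMeasure (erMeasure n q) := by
  unfold erMeasure; infer_instance

section UniformFinset

variable {α : Type*} [MeasurableSpace α] [DiscreteMeasurableSpace α]

lemma uniformFinset_apply (t : Finset α) (A : Set α) :
    uniformFinset t A = (t.card : ℝ≥0∞)⁻¹ * ∑ a ∈ t, A.indicator 1 a := by
  simp [uniformFinset, Measure.finsetSum_apply, Measure.dirac_apply' _ (MeasurableSet.of_discrete)]

lemma isProbabilityMeasure_uniformFinset {t : Finset α} (ht : t.Nonempty) :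
    IsProbabilityMeasure (uniformFinset t) :=
  ⟨by simp [uniformFinset_apply, ENNReal.inv_mul_cancel, ht.ne_empty]⟩

lemma measurePreserving_uniformFinset (t : Finset α) (g : α ≃ α) (hg : ∀ x, g x ∈ t ↔ x ∈ t) :
    MeasurePreserving g (uniformFinset t) (uniformFinset t) := by
  refine ⟨.of_discrete, Measure.ext fun A hA => ?_⟩
  rw [Measure.map_apply .of_discrete hA, uniformFinset_apply, uniformFinset_apply]
  congr 1
  exact Finset.sum_equiv g (fun x => (hg x).symm) (fun x _ => by simp [Set.indicator_apply])

end UniformFinset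

instance (n : ℕ) : IsProbabilityMeasure (uniformPerm n) :=
  isProbabilityMeasure_uniformFinset ⟨1, Finset.mem_univ _⟩

lemma isProbabilityMeasure_uniformSized {n m : ℕ} (h : m ≤ n) :
    IsProbabilityMeasure (uniformSized n m) := by
  obtain ⟨t, -, ht⟩ := Finset.exists_subset_card_eq (s := (Finset.univ : Finset (Fin n)))
    (by simpa using h)
  exact isProbabilityMeasure_uniformFinset ⟨t, by simpa using ht⟩

lemma measurePreserving_erMeasure_comp (n : ℕ) (q : ℝ) (e : EdgeIdx n ≃ EdgeIdx n) :
    MeasurePreserving (fun F : Graph n => F ∘ e) (erMeasure n q) (erMeasure n q) :=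
  measurePreserving_arrowCongr' (fun _ => bern q) (fun _ => bern q) e.symm
    (MeasurableEquiv.refl Bool) (fun _ => .id _)

section Relabel

variable {n : ℕ}

lemma edgeMap_edgeMap (π σ : Equiv.Perm (Fin n)) (e : EdgeIdx n) :
    edgeMap π (edgeMap σ e) = edgeMap (π * σ) e :=
  Subtype.ext (Sym2.map_map _)

lemma edgeMap_one (e : EdgeIdx n) : edgeMap 1 e = e :=
  Subtype.ext (congrFun Sym2.map_id' e.1)

def edgeEquiv (π : Equiv.Perm (Fin n)) : EdgeIdx n ≃ EdgeIdx n where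
  toFun := edgeMap π
  invFun := edgeMap π⁻¹
  left_inv e := by rw [edgeMap_edgeMap, inv_mul_cancel, edgeMap_one]
  right_inv e := by rw [edgeMap_edgeMap, mul_inv_cancel, edgeMap_one]

lemma touches_map (π : Equiv.Perm (Fin n)) (B : Finset (Fin n)) (e : EdgeIdx n) :
    touches (B.map π.toEmbedding) e ↔ touches B (edgeMap π⁻¹ e) := by
  simp only [touches, edgeMap, Finset.mem_map_equiv, Sym2.mem_map]
  constructor
  · rintro ⟨i, hi, hie⟩
    exact ⟨π.symm i, hi, i, hie, rfl⟩
  · rintro ⟨_, hj, i, hie, rfl⟩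
    exact ⟨i, hj, hie⟩

def Out.relabel (π : Equiv.Perm (Fin n)) (o : Out n) : Out n where
  B1 := o.B1
  B2 := o.B2.map π.toEmbedding
  Gt1 := o.Gt1
  Gt2 := o.Gt2 ∘ edgeMap π⁻¹
  prm := π * o.prm

/-- `G2` is read off the parent graph through `π*⁻¹`, so replacing `π*` by `π * π*` relabels
`G2`; relabelling the fresh graph and `B2` along with it relabels `G̃2`. -/
def sampleRelabel (π : Equiv.Perm (Fin n)) : WCGSpace n ≃ WCGSpace n :=
  (Equiv.refl _).prodCongr <| (Equiv.refl _).prodCongr <| (Equiv.refl _).prodCongr <|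
    (Equiv.refl _).prodCongr <| (Equiv.arrowCongr (edgeEquiv π) (Equiv.refl Bool)).prodCongr <|
      (Equiv.mulLeft π).prodCongr <| (Equiv.refl _).prodCongr π.finsetCongr

lemma wcgBuild_sampleRelabel (π : Equiv.Perm (Fin n)) (ω : WCGSpace n) :
    wcgBuild n (sampleRelabel π ω) = (wcgBuild n ω).relabel π := by
  obtain ⟨G, S1, S2, F1, F2, σ, B1, B2⟩ := ω
  change wcgBuild n (G, S1, S2, F1, F2 ∘ edgeMap π⁻¹, π * σ, B1, B2.map π.toEmbedding) = _
  simp only [wcgBuild, Out.relabel, Out.mk.injEq, true_and]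
  refine ⟨funext fun e => ?_, trivial⟩
  simp only [corrupt, Function.comp_apply]
  split_ifs with h₁ h₂ h₂
  · rfl
  · exact absurd ((touches_map π B2 e).1 h₁) h₂
  · exact absurd ((touches_map π B2 e).2 h₂) h₁
  · simp only [edgeMap_edgeMap, mul_inv_rev]

lemma measurePreserving_sampleRelabel (π : Equiv.Perm (Fin n)) (p s : ℝ) {a b : ℕ}
    (ha : a ≤ n) (hb : b ≤ n) :
    MeasurePreserving (sampleRelabel π) (wcgBase n p s a b) (wcgBase n p s a b) := by
  have := isProbabilityMeasure_uniformSized ha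
  have := isProbabilityMeasure_uniformSized hb
  have hF : MeasurePreserving (Equiv.arrowCongr (edgeEquiv π) (Equiv.refl Bool))
      (erMeasure n (p * s)) (erMeasure n (p * s)) :=
    measurePreserving_erMeasure_comp n (p * s) (edgeEquiv π).symm
  have hσ : MeasurePreserving (Equiv.mulLeft π) (uniformPerm n) (uniformPerm n) :=
    measurePreserving_uniformFinset _ _ (by simp)
  have hB : MeasurePreserving π.finsetCongr (uniformSized n b) (uniformSized n b) :=
    measurePreserving_uniformFinset _ _ (by simp [Equiv.finsetCongr_apply])
  exact (MeasurePreserving.id _).prod <| (MeasurePreserving.id _).prod <|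
    (MeasurePreserving.id _).prod <| (MeasurePreserving.id _).prod <|
      hF.prod <| hσ.prod <| (MeasurePreserving.id _).prod hB

lemma WCG_preimage_relabel (π : Equiv.Perm (Fin n)) (p s : ℝ) {a b : ℕ}
    (ha : a ≤ n) (hb : b ≤ n) (A : Set (Out n)) :
    WCG n p s a b (Out.relabel π ⁻¹' A) = WCG n p s a b A := by
  have hcomm : Out.relabel π ∘ wcgBuild n = wcgBuild n ∘ sampleRelabel π :=
    funext fun ω => (wcgBuild_sampleRelabel π ω).symm
  rw [WCG, Measure.map_apply .of_discrete .of_discrete, Measure.map_apply .of_discrete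
    .of_discrete, ← Set.preimage_comp, hcomm, Set.preimage_comp]
  exact (measurePreserving_sampleRelabel π p s ha hb).measure_preimage
    MeasurableSet.of_discrete.nullMeasurableSet

end Relabel

namespace Matching

variable {n : ℕ}

lemma ext {μ ν : Matching n} (hdom : μ.dom = ν.dom) (hf : μ.f = ν.f) : μ = ν := by
  cases μ; cases ν; simp_all

def mismatches (π : Equiv.Perm (Fin n)) (μ : Matching n) : Finset (Fin n) :=
  μ.dom.filter fun i => μ.f i ≠ π i

def IsMaximalFor (π : Equiv.Perm (Fin n)) (μ : Matching n) : Prop :=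
  ∀ i, i ∈ μ.dom ∨ π i ∈ μ.dom.image μ.f

/-- `μ.f` is arbitrary outside `μ.dom`; fixing it to `π` there as well makes a canonical
matching determined by its mismatched pairs. -/
def IsCanonical (π : Equiv.Perm (Fin n)) (μ : Matching n) : Prop :=
  μ.IsMaximalFor π ∧ ∀ i ∉ μ.mismatches π, μ.f i = π i

def comp (σ : Equiv.Perm (Fin n)) (μ : Matching n) : Matching n where
  dom := μ.dom
  f := σ ∘ μ.f
  injOn := σ.injective.comp_injOn μ.injOn

lemma comp_comp (σ τ : Equiv.Perm (Fin n)) (μ : Matching n) :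
    (μ.comp σ).comp τ = μ.comp (τ * σ) := rfl

lemma comp_one (μ : Matching n) : μ.comp 1 = μ := rfl

lemma mismatches_comp (σ π : Equiv.Perm (Fin n)) (μ : Matching n) :
    (μ.comp σ).mismatches (σ * π) = μ.mismatches π :=
  Finset.filter_congr fun _ _ => σ.injective.ne_iff

lemma IsCanonical.comp {π : Equiv.Perm (Fin n)} {μ : Matching n} (h : μ.IsCanonical π)
    (σ : Equiv.Perm (Fin n)) : (μ.comp σ).IsCanonical (σ * π) := by
  refine ⟨fun i => (h.1 i).imp id fun hi => ?_, fun i hi => ?_⟩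
  · obtain ⟨j, hj, hji⟩ := Finset.mem_image.1 hi
    exact Finset.mem_image.2 ⟨j, hj, congrArg σ hji⟩
  · rw [mismatches_comp] at hi
    exact congrArg σ (h.2 i hi)

lemma mismatches_subset_dom (π : Equiv.Perm (Fin n)) (μ : Matching n) :
    μ.mismatches π ⊆ μ.dom :=
  Finset.filter_subset _ _

lemma IsCanonical.mem_dom_iff {π : Equiv.Perm (Fin n)} {μ : Matching n} (h : μ.IsCanonical π)
    (i : Fin n) :
    i ∈ μ.dom ↔ i ∈ μ.mismatches π ∨ π i ∉ (μ.mismatches π).image μ.f := by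
  by_cases hi : i ∈ μ.mismatches π
  · simp [hi, mismatches_subset_dom π μ hi]
  simp only [hi, false_or]
  constructor
  · intro hdom hmem
    obtain ⟨j, hj, hji⟩ := Finset.mem_image.1 hmem
    rw [← h.2 i hi] at hji
    exact hi (μ.injOn (mismatches_subset_dom π μ hj) hdom hji ▸ hj)
  · intro himg
    by_contra hdom
    obtain ⟨j, hj, hji⟩ := Finset.mem_image.1 ((h.1 i).resolve_left hdom)
    have hjm : j ∉ μ.mismatches π := fun hjm => himg (Finset.mem_image.2 ⟨j, hjm, hji⟩)
    rw [h.2 j hjm] at hji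
    exact hdom (π.injective hji ▸ hj)

lemma card_filter_isCanonical_le (π : Equiv.Perm (Fin n)) (d : ℕ) :
    (Finset.univ.filter fun μ : Matching n =>
      μ.IsCanonical π ∧ (μ.mismatches π).card = d).card ≤ (n * n).choose d := by
  set graph : Matching n → Finset (Fin n × Fin n) := fun μ =>
    (μ.mismatches π).image fun i => (i, μ.f i)
  have hfst (μ : Matching n) : (graph μ).image Prod.fst = μ.mismatches π := by
    simp [graph, Finset.image_image, Function.comp_def]
  have hmaps : ∀ μ ∈ Finset.univ.filter fun μ : Matching n =>
      μ.IsCanonical π ∧ (μ.mismatches π).card = d,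
      graph μ ∈ (Finset.univ : Finset (Fin n × Fin n)).powersetCard d := by
    intro μ hμ
    rw [Finset.mem_powersetCard, ← (Finset.mem_filter.1 hμ).2.2]
    exact ⟨Finset.subset_univ _, Finset.card_image_of_injective _ fun _ _ h => congrArg Prod.fst h⟩
  have hinj : Set.InjOn graph (Finset.univ.filter fun μ : Matching n =>
      μ.IsCanonical π ∧ (μ.mismatches π).card = d) := by
    intro μ hμ ν hν hgraph
    have hμ := (Finset.mem_filter.1 hμ).2.1
    have hν := (Finset.mem_filter.1 hν).2.1
    have hmis : μ.mismatches π = ν.mismatches π := by rw [← hfst, hgraph, hfst]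
    have hf : μ.f = ν.f := by
      funext i
      by_cases hi : i ∈ μ.mismatches π
      · have hmem : (i, μ.f i) ∈ graph ν := hgraph ▸ Finset.mem_image_of_mem _ hi
        obtain ⟨j, -, hji⟩ := Finset.mem_image.1 hmem
        obtain ⟨rfl, h⟩ := Prod.mk.inj hji
        exact h.symm
      · rw [hμ.2 i hi, hν.2 i (hmis ▸ hi)]
    exact Matching.ext (by ext i; rw [hμ.mem_dom_iff, hν.mem_dom_iff, hmis, hf]) hf
  calc _ ≤ ((Finset.univ : Finset (Fin n × Fin n)).powersetCard d).card :=
        Finset.card_le_card_of_injOn graph hmaps hinj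
    _ = (n * n).choose d := by simp

def completion (π : Equiv.Perm (Fin n)) (ν : Matching n) : Matching n where
  dom := ν.dom ∪ Finset.univ.filter fun i => i ∉ ν.dom ∧ π i ∉ ν.dom.image ν.f
  f i := if i ∈ ν.dom then ν.f i else π i
  injOn := by
    intro x hx y hy hxy
    simp only [Finset.coe_union, Finset.coe_filter, Set.mem_union, Finset.mem_coe,
      Finset.mem_univ, true_and, Set.mem_ofPred_eq] at hx hy
    by_cases hxd : x ∈ ν.dom <;> by_cases hyd : y ∈ ν.dom <;> simp only [hxd, hyd, if_true,
      if_false] at hxy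
    · exact ν.injOn hxd hyd hxy
    · exact absurd (Finset.mem_image.2 ⟨x, hxd, hxy⟩) ((hy.resolve_left hyd).2)
    · exact absurd (Finset.mem_image.2 ⟨y, hyd, hxy.symm⟩) ((hx.resolve_left hxd).2)
    · exact π.injective hxy

lemma dom_subset_completion (π : Equiv.Perm (Fin n)) (ν : Matching n) :
    ν.dom ⊆ (ν.completion π).dom :=
  Finset.subset_union_left

lemma completion_f_of_mem (π : Equiv.Perm (Fin n)) {ν : Matching n} {i : Fin n}
    (hi : i ∈ ν.dom) : (ν.completion π).f i = ν.f i :=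
  if_pos hi

lemma mismatches_completion (π : Equiv.Perm (Fin n)) (ν : Matching n) :
    (ν.completion π).mismatches π = ν.mismatches π := by
  ext i
  by_cases hi : i ∈ ν.dom
  · simp [mismatches, hi, completion_f_of_mem π hi, dom_subset_completion π ν hi]
  · simp [mismatches, completion, hi]

lemma isCanonical_completion (π : Equiv.Perm (Fin n)) (ν : Matching n) :
    (ν.completion π).IsCanonical π := by
  refine ⟨fun i => ?_, fun i hi => ?_⟩
  · by_cases hdom : i ∈ ν.dom
    · exact Or.inl (dom_subset_completion π ν hdom)
    by_cases himg : π i ∈ ν.dom.image ν.f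
    · obtain ⟨j, hj, hji⟩ := Finset.mem_image.1 himg
      exact Or.inr (Finset.mem_image.2
        ⟨j, dom_subset_completion π ν hj, (completion_f_of_mem π hj).trans hji⟩)
    · exact Or.inl (Finset.mem_union_right _ (Finset.mem_filter.2 ⟨Finset.mem_univ _, hdom, himg⟩))
  · rw [mismatches_completion] at hi
    by_cases hdom : i ∈ ν.dom
    · rw [completion_f_of_mem π hdom]
      by_contra hne
      exact hi (Finset.mem_filter.2 ⟨hdom, hne⟩)
    · exact if_neg hdom

def ofPerm (π : Equiv.Perm (Fin n)) (A : Finset (Fin n)) : Matching n :=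
  ⟨A, π, π.injective.injOn⟩

end Matching

section Intersection

variable {n : ℕ}

lemma adjB_of_ne (G : Graph n) {i j : Fin n} (h : i ≠ j) :
    adjB G i j = G ⟨s(i, j), by simpa [Sym2.mk_isDiag_iff] using h⟩ :=
  dif_neg h

lemma adjB_comp_edgeMap (H : Graph n) (π : Equiv.Perm (Fin n)) (x y : Fin n) :
    adjB (H ∘ edgeMap π⁻¹) (π x) (π y) = adjB H x y := by
  by_cases h : x = y
  · simp [adjB, h]
  · rw [adjB_of_ne _ (π.injective.ne h), adjB_of_ne _ h]
    exact congrArg H (Subtype.ext (by simp [edgeMap]))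

lemma adjB_interGraph (H1 H2 : Graph n) (π : Equiv.Perm (Fin n)) (i j : Fin n) :
    adjB (interGraph H1 H2 π) i j = (adjB H1 i j && adjB H2 (π i) (π j)) := by
  by_cases h : i = j
  · simp [adjB, h]
  · rw [adjB_of_ne _ h, adjB_of_ne _ h, adjB_of_ne _ (π.injective.ne h)]
    rfl

lemma interDeg_comp (H1 H2 : Graph n) (π : Equiv.Perm (Fin n)) (μ : Matching n) (i : Fin n) :
    interDeg H1 (H2 ∘ edgeMap π⁻¹) (μ.comp π) i = interDeg H1 H2 μ i := by
  simp only [interDeg, Matching.comp, Function.comp_apply, adjB_comp_edgeMap]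

lemma interDeg_le_of_extends (H1 H2 : Graph n) {μ ν : Matching n} (hdom : μ.dom ⊆ ν.dom)
    (hf : ∀ j ∈ μ.dom, ν.f j = μ.f j) {i : Fin n} (hi : i ∈ μ.dom) :
    interDeg H1 H2 μ i ≤ interDeg H1 H2 ν i := by
  refine Finset.card_le_card fun j hj => ?_
  obtain ⟨hjdom, hadj⟩ := Finset.mem_filter.1 hj
  exact Finset.mem_filter.2 ⟨hdom hjdom, by rwa [hf i hi, hf j hjdom]⟩

lemma interDeg_eq_degInSet (H1 H2 : Graph n) (π : Equiv.Perm (Fin n)) {μ : Matching n}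
    (hagree : ∀ j ∈ μ.dom, μ.f j = π j) {i : Fin n} (hi : i ∈ μ.dom) :
    interDeg H1 H2 μ i = degInSet (interGraph H1 H2 π) μ.dom i := by
  refine congrArg Finset.card (Finset.filter_congr fun j hj => ?_)
  rw [adjB_interGraph, hagree i hi, hagree j hj, Bool.and_eq_true]

lemma degInSet_mono (G : Graph n) {A B : Finset (Fin n)} (h : A ⊆ B) (i : Fin n) :
    degInSet G A i ≤ degInSet G B i :=
  Finset.card_le_card (Finset.filter_subset_filter _ h)

lemma IsCoreSet.subset_coreK {G : Graph n} {k : ℕ} {A : Finset (Fin n)} (hA : IsCoreSet G k A) :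
    A ⊆ coreK G k :=
  Finset.le_sup (f := id) (Finset.mem_filter.2 ⟨Finset.mem_univ _, hA⟩)

lemma isCoreSet_coreK (G : Graph n) (k : ℕ) : IsCoreSet G k (coreK G k) := by
  intro i hi
  obtain ⟨A, hA, hiA⟩ := Finset.mem_sup.1 hi
  have hA := (Finset.mem_filter.1 hA).2
  exact (hA i hiA).trans (degInSet_mono G hA.subset_coreK i)

/-- The domain is a core set of `H1 ∧_π H2`, and `π` restricted to the `k`-core is a competing
`k`-core matching. -/
lemma IsKCoreEstimator.dom_eq_coreK {k : ℕ} {E : Graph n × Graph n → Matching n}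
    (hE : IsKCoreEstimator k E) (x : Graph n × Graph n) (π : Equiv.Perm (Fin n))
    (hagree : ∀ i ∈ (E x).dom, (E x).f i = π i) :
    (E x).dom = coreK (interGraph x.1 x.2 π) k := by
  have hsub : (E x).dom ⊆ coreK (interGraph x.1 x.2 π) k :=
    IsCoreSet.subset_coreK fun i hi =>
      interDeg_eq_degInSet x.1 x.2 π hagree hi ▸ (hE x).1 i hi
  refine Finset.eq_of_subset_of_card_le hsub ((hE x).2 (Matching.ofPerm π _) fun i hi => ?_)
  rw [interDeg_eq_degInSet x.1 x.2 π (fun _ _ => rfl) hi]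
  exact isCoreSet_coreK _ k i hi

end Intersection

section Events

variable {n : ℕ}

def heavyMismatches (k : ℕ) (π : Equiv.Perm (Fin n)) (μ : Matching n) : Set (Out n) :=
  {o | k * (μ.mismatches π).card ≤ ∑ i ∈ μ.mismatches π, interDeg o.Gt1 o.Gt2 μ i}

def mismatchEvent (k : ℕ) (π : Equiv.Perm (Fin n)) (μ : Matching n) : Set (Out n) :=
  {o | o.prm = π} ∩ heavyMismatches k π μ

def Recovers (k : ℕ) (E : Graph n × Graph n → Matching n) (o : Out n) : Prop :=
  (E (o.Gt1, o.Gt2)).dom = coreK (interGraph o.Gt1 o.Gt2 o.prm) k ∧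
    ∀ i ∈ (E (o.Gt1, o.Gt2)).dom, (E (o.Gt1, o.Gt2)).f i = o.prm i

/-- If the estimate `ν = E (G̃1, G̃2)` fails, its completion by `π*` is a canonical matching
whose mismatches all have degree at least `k`, as they already had in `G̃1 ∧_ν G̃2`. -/
lemma exists_mismatchEvent_of_not_recovers {k : ℕ} {E : Graph n × Graph n → Matching n}
    (hE : IsKCoreEstimator k E) {o : Out n} (h : ¬ Recovers k E o) :
    ∃ μ : Matching n, μ.IsCanonical o.prm ∧ (μ.mismatches o.prm).Nonempty ∧
      o ∈ mismatchEvent k o.prm μ := by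
  set ν := E (o.Gt1, o.Gt2)
  refine ⟨ν.completion o.prm, ν.isCanonical_completion o.prm, ?_, rfl, ?_⟩
  · rw [Matching.mismatches_completion, Finset.nonempty_iff_ne_empty]
    intro hempty
    have hagree : ∀ i ∈ ν.dom, ν.f i = o.prm i := fun i hi => by
      by_contra hne
      exact Finset.notMem_empty i (hempty ▸ Finset.mem_filter.2 ⟨hi, hne⟩)
    exact h ⟨hE.dom_eq_coreK _ o.prm hagree, hagree⟩
  · change k * _ ≤ _
    rw [mul_comm, ← smul_eq_mul]
    refine Finset.card_nsmul_le_sum _ _ _ fun i hi => ?_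
    rw [Matching.mismatches_completion] at hi
    have hdom := Matching.mismatches_subset_dom _ _ hi
    exact ((hE _).1 i hdom).trans <| interDeg_le_of_extends _ _ (ν.dom_subset_completion _)
      (fun j hj => Matching.completion_f_of_mem _ hj) hdom

lemma relabel_preimage_mismatchEvent (k : ℕ) (σ π : Equiv.Perm (Fin n)) (μ : Matching n) :
    Out.relabel σ ⁻¹' mismatchEvent k (σ * π) (μ.comp σ) = mismatchEvent k π μ := by
  ext o
  simp only [mismatchEvent, heavyMismatches, Set.mem_preimage, Set.mem_inter_iff,
    Set.mem_ofPred_eq, Out.relabel, mul_right_inj, Matching.mismatches_comp, interDeg_comp]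

end Events

section Probability

variable {n : ℕ} {p s : ℝ} {a b : ℕ}

lemma isProbabilityMeasure_WCG (ha : a ≤ n) (hb : b ≤ n) :
    IsProbabilityMeasure (WCG n p s a b) := by
  have := isProbabilityMeasure_uniformSized ha
  have := isProbabilityMeasure_uniformSized hb
  have : IsProbabilityMeasure (wcgBase n p s a b) := by unfold wcgBase; infer_instance
  exact Measure.isProbabilityMeasure_map Measurable.of_discrete.aemeasurable

lemma WCG_prm_eq_one (ha : a ≤ n) (hb : b ≤ n) :
    WCG n p s a b {o | o.prm = 1} = (n.factorial : ℝ≥0∞)⁻¹ := by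
  have := isProbabilityMeasure_WCG (p := p) (s := s) ha hb
  have hsym (π : Equiv.Perm (Fin n)) :
      WCG n p s a b {o | o.prm = π} = WCG n p s a b {o | o.prm = 1} := by
    rw [← WCG_preimage_relabel π p s ha hb]
    congr 1
    ext o
    simp [Out.relabel]
  have hsum : ∑ π : Equiv.Perm (Fin n), WCG n p s a b {o | o.prm = π} = 1 := by
    rw [← measure_biUnion_finset (fun π _ σ _ h => Set.disjoint_left.2 fun o h₁ h₂ =>
      h (h₁.symm.trans h₂)) fun _ _ => .of_discrete]
    rw [← measure_univ (μ := WCG n p s a b)]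
    congr 1
    ext o
    simp
  simp only [hsym, Finset.sum_const, Finset.card_univ, Fintype.card_perm, Fintype.card_fin,
    nsmul_eq_mul] at hsum
  exact ENNReal.eq_inv_of_mul_eq_one_left (by rwa [mul_comm])

lemma WCG_mismatchEvent_comp (ha : a ≤ n) (hb : b ≤ n) (k : ℕ) (π : Equiv.Perm (Fin n))
    (μ : Matching n) :
    WCG n p s a b (mismatchEvent k π (μ.comp π)) = (n.factorial : ℝ≥0∞)⁻¹ *
      (WCG n p s a b)[heavyMismatches k 1 μ | {o | o.prm = 1}] := by
  have := isProbabilityMeasure_WCG (p := p) (s := s) ha hb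
  have hrel := relabel_preimage_mismatchEvent k π 1 μ
  rw [mul_one] at hrel
  rw [← WCG_preimage_relabel π p s ha hb, hrel, ← WCG_prm_eq_one ha hb, mul_comm,
    cond_mul_eq_inter .of_discrete]
  rfl

lemma WCG_not_recovers_le (ha : a ≤ n) (hb : b ≤ n) {k : ℕ}
    {E : Graph n × Graph n → Matching n} (hE : IsKCoreEstimator k E) :
    WCG n p s a b {o | ¬ Recovers k E o} ≤
      ∑ μ ∈ Finset.univ.filter (fun μ : Matching n => μ.IsCanonical 1 ∧ (μ.mismatches 1).Nonempty),
        (WCG n p s a b)[heavyMismatches k 1 μ | {o | o.prm = 1}] := by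
  set C := Finset.univ.filter fun μ : Matching n => μ.IsCanonical 1 ∧ (μ.mismatches 1).Nonempty
  have hcover : {o | ¬ Recovers k E o} ⊆
      ⋃ π : Equiv.Perm (Fin n), ⋃ μ ∈ C, mismatchEvent k π (μ.comp π) := by
    intro o ho
    obtain ⟨μ, hcan, hne, hev⟩ := exists_mismatchEvent_of_not_recovers hE ho
    have hcan' := hcan.comp o.prm⁻¹
    have hmis := μ.mismatches_comp o.prm⁻¹ o.prm
    rw [inv_mul_cancel] at hcan' hmis
    have hback : (μ.comp o.prm⁻¹).comp o.prm = μ := by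
      rw [Matching.comp_comp, mul_inv_cancel, Matching.comp_one]
    simp only [Set.mem_iUnion]
    exact ⟨o.prm, μ.comp o.prm⁻¹, Finset.mem_filter.2 ⟨Finset.mem_univ _, hcan', hmis ▸ hne⟩,
      by rwa [hback]⟩
  have hfac : (n.factorial : ℝ≥0∞)⁻¹ * n.factorial = 1 :=
    ENNReal.inv_mul_cancel (by exact_mod_cast n.factorial_ne_zero) (ENNReal.natCast_ne_top _)
  calc _ ≤ ∑ π : Equiv.Perm (Fin n), ∑ μ ∈ C, WCG n p s a b (mismatchEvent k π (μ.comp π)) :=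
        (measure_mono hcover).trans <| (measure_iUnion_fintype_le _ _).trans <|
          Finset.sum_le_sum fun _ _ => measure_biUnion_finset_le _ _
    _ = _ := by
      simp only [WCG_mismatchEvent_comp ha hb, ← Finset.mul_sum, Finset.sum_const,
        Finset.card_univ, Fintype.card_perm, Fintype.card_fin, nsmul_eq_mul, ← mul_assoc, hfac,
        one_mul]

end Probability

section Exponent

variable {n : ℕ}

/-- The quantity `ξ` of the theorem. -/
noncomputable def mismatchExponent (P : Measure (Out n)) (k : ℕ) : ℝ :=
  ⨆ (d : ℕ) (_ : d ∈ Finset.Icc 1 n) (μ : Matching n)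
    (_ : μ.IsMaximalFor 1 ∧ (μ.mismatches 1).card = d),
    (P[{o | k * d ≤ ∑ i ∈ μ.mismatches 1, interDeg o.Gt1 o.Gt2 μ i} | {o | o.prm = 1}]).toReal
      ^ ((d : ℝ)⁻¹)

lemma mismatchExponent_nonneg (P : Measure (Out n)) (k : ℕ) : 0 ≤ mismatchExponent P k :=
  Real.iSup_nonneg fun _ => Real.iSup_nonneg fun _ => Real.iSup_nonneg fun _ =>
    Real.iSup_nonneg fun _ => by positivity

lemma toReal_cond_mismatches_le (P : Measure (Out n)) (k : ℕ) {μ : Matching n}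
    (hμ : μ.IsCanonical 1) (hne : (μ.mismatches 1).Nonempty) :
    (P[heavyMismatches k 1 μ | {o | o.prm = 1}]).toReal ≤
      mismatchExponent P k ^ (μ.mismatches 1).card := by
  have hprob (t : Set (Out n)) : (P[t | {o | o.prm = 1}]).toReal ≤ 1 :=
    ENNReal.toReal_le_of_le_ofReal zero_le_one (by simpa using prob_le_one)
  have hd : 0 < (μ.mismatches 1).card := hne.card_pos
  rw [← Real.rpow_natCast, ← Real.rpow_inv_le_iff_of_pos ENNReal.toReal_nonneg
    (mismatchExponent_nonneg P k) (by exact_mod_cast hd)]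
  unfold mismatchExponent
  refine le_iSup_iSup_of_le (i := (μ.mismatches 1).card) (j := μ) (fun d ν => ?_) ?_ ?_ le_rfl
  · exact Real.rpow_le_one ENNReal.toReal_nonneg (hprob _) (by positivity)
  · exact Finset.mem_Icc.2 ⟨hd, by simpa using Finset.card_le_univ (μ.mismatches 1)⟩
  · exact ⟨hμ.1, rfl⟩

end Exponent

lemma WCG_real_not_recovers_le {n : ℕ} {p s : ℝ} {a b : ℕ} (ha : a ≤ n) (hb : b ≤ n) {k : ℕ}
    {E : Graph n × Graph n → Matching n} (hE : IsKCoreEstimator k E) :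
    (WCG n p s a b).real {o | Recovers k E o}ᶜ ≤
      Real.exp ((n : ℝ) ^ 2 * mismatchExponent (WCG n p s a b) k) - 1 := by
  have := isProbabilityMeasure_WCG (p := p) (s := s) ha hb
  set C := Finset.univ.filter fun μ : Matching n => μ.IsCanonical 1 ∧ (μ.mismatches 1).Nonempty
  refine (ENNReal.toReal_mono (ENNReal.sum_ne_top.2 fun _ _ => measure_ne_top _ _)
    (WCG_not_recovers_le ha hb hE)).trans ?_
  rw [ENNReal.toReal_sum fun _ _ => measure_ne_top _ _, sq, ← Nat.cast_mul]
  refine sum_le_exp_sub_one_of_card_fiber_le C (fun μ => (μ.mismatches 1).card) _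
    (mismatchExponent_nonneg _ k) (n * n) n (fun μ hμ => ?_)
    (fun μ hμ => toReal_cond_mismatches_le _ k (Finset.mem_filter.1 hμ).2.1
      (Finset.mem_filter.1 hμ).2.2) (fun d => ?_)
  · exact Finset.mem_Icc.2 ⟨(Finset.mem_filter.1 hμ).2.2.card_pos,
      by simpa using Finset.card_le_univ (μ.mismatches 1)⟩
  · refine (Finset.card_le_card fun μ hμ => ?_).trans (Matching.card_filter_isCanonical_le 1 d)
    simp only [C, Finset.mem_filter] at hμ ⊢
    exact ⟨hμ.1.1, hμ.1.2.1, hμ.2⟩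

theorem stmt13_general (n k : ℕ) (p s γ lam : ℝ)
    (hγ : γ ∈ Set.Icc (0:ℝ) 1)
    (a b : ℕ) (ha : (a : ℝ) = lam * γ * n) (hb : (b : ℝ) = (1 - lam) * γ * n)
    (E : Graph n × Graph n → Matching n) (hE : IsKCoreEstimator k E)
    (ξ : ℝ)
    (hξ : ξ = ⨆ (d : ℕ) (_ : d ∈ Finset.Icc 1 n) (μ : Matching n)
        (_ : (∀ i : Fin n, i ∈ μ.dom ∨ i ∈ μ.dom.image μ.f) ∧
             (μ.dom.filter fun i => μ.f i ≠ i).card = d),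
        ((ProbabilityTheory.cond (WCG n p s a b) {ω : Out n | ω.prm = 1})
            {ω : Out n | k * d ≤
              ∑ i ∈ μ.dom.filter (fun i => μ.f i ≠ i), interDeg ω.Gt1 ω.Gt2 μ i}).toReal
          ^ ((d : ℝ)⁻¹)) :
    2 - Real.exp ((n : ℝ) ^ 2 * ξ) ≤
      (WCG n p s a b {ω : Out n |
          (E (ω.Gt1, ω.Gt2)).dom = coreK (interGraph ω.Gt1 ω.Gt2 ω.prm) k ∧
          ∀ i ∈ (E (ω.Gt1, ω.Gt2)).dom, (E (ω.Gt1, ω.Gt2)).f i = ω.prm i}).toReal := by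
  obtain rfl : ξ = mismatchExponent (WCG n p s a b) k := hξ
  have hab : a + b ≤ n := by
    have : (a + b : ℝ) ≤ n := by rw [ha, hb]; nlinarith [hγ.2, (n.cast_nonneg : (0 : ℝ) ≤ n)]
    exact_mod_cast this
  have han : a ≤ n := by omega
  have hbn : b ≤ n := by omega
  have := isProbabilityMeasure_WCG (p := p) (s := s) han hbn
  have hbad := WCG_real_not_recovers_le (p := p) (s := s) han hbn hE
  rw [probReal_compl_eq_one_sub .of_discrete] at hbad
  change _ ≤ (WCG n p s a b).real {o | Recovers k E o}
  linarith

/-- the k-core estimator's output has domain equal to the k-core of the true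
intersection graph and agrees with π* on it, with probability at least `2 - exp(n²ξ)`. -/
theorem stmt13 (n k : ℕ) (p s γ lam : ℝ)
    (hp : p ∈ Set.Ioo (0:ℝ) 1) (hs : s ∈ Set.Ioc (0:ℝ) 1)
    (hγ : γ ∈ Set.Icc (0:ℝ) 1) (hlam : lam ∈ Set.Icc (0:ℝ) 1)
    (a b : ℕ) (ha : (a : ℝ) = lam * γ * n) (hb : (b : ℝ) = (1 - lam) * γ * n)
    (E : Graph n × Graph n → Matching n) (hE : IsKCoreEstimator k E)
    (ξ : ℝ)
    (hξ : ξ = ⨆ (d : ℕ) (_ : d ∈ Finset.Icc 1 n) (μ : Matching n)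
        (_ : (∀ i : Fin n, i ∈ μ.dom ∨ i ∈ μ.dom.image μ.f) ∧
             (μ.dom.filter fun i => μ.f i ≠ i).card = d),
        ((ProbabilityTheory.cond (WCG n p s a b) {ω : Out n | ω.prm = 1})
            {ω : Out n | k * d ≤
              ∑ i ∈ μ.dom.filter (fun i => μ.f i ≠ i), interDeg ω.Gt1 ω.Gt2 μ i}).toReal
          ^ ((d : ℝ)⁻¹)) :
    2 - Real.exp ((n : ℝ) ^ 2 * ξ) ≤
      (WCG n p s a b {ω : Out n |
          (E (ω.Gt1, ω.Gt2)).dom = coreK (interGraph ω.Gt1 ω.Gt2 ω.prm) k ∧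
          ∀ i ∈ (E (ω.Gt1, ω.Gt2)).dom, (E (ω.Gt1, ω.Gt2)).f i = ω.prm i}).toReal :=
  stmt13_general n k p s γ lam hγ a b ha hb E hE ξ hξ

end Paper
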